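/- Let ω ∈ ℝ and K, T > 0 satisfy ω > 2KT, and let μ0 ∈ (0,1/2) be such that f̄ attains its minimum over [0,1] exactly at μ0 and μ1 := 1−μ0. Then the well function f(s) := f̄(s) − f̄(μ0) has super-quadratic wells: there exists a constant Cw > 0 such that f(s) ≥ Cw · min((s−μ0)², (s−μ1)²) for all s ∈ [0,1]. -/

import Mathlib

noncomputable def fbar (ω K T : ℝ) (s : ℝ) : ℝ :=
  ω * s * (1 - s) + K * T * (s * Real.log s + (1 - s) * Real.log (1 - s))

/-!
At the interior minimiser `μ0` we have `f̄'(μ0) = 0`, and `f̄''(s) = KT/(s(1-s)) - 2ω` is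
decreasing on `(0, 1/2]`. If `f̄''(μ0) ≤ 0`, then `f̄` would be concave on `[μ0, 1/2]` with a
critical point at `μ0`, forcing `f̄(1/2) ≤ f̄(μ0)`, against strict minimality. Hence
`f̄''(μ0) > 0`, so `f̄'' ≥ c > 0` on some `(0, a]` with `a > μ0`, which gives the quadratic bound
`f ≥ c/2 (s - μ0)²` on `[0, a]`. The symmetry `f̄(1 - s) = f̄(s)` transfers it to `[1 - a, 1]`,
and on the compact middle `[a, 1 - a]` the continuous `f` has a positive lower bound.
-/

open Set

theorem half_mul_sq_le_sub_of_monotoneOn {f f' : ℝ → ℝ} {a b c x₀ : ℝ}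
    (hf : ContinuousOn f (Icc a b)) (hderiv : ∀ x ∈ Ioo a b, HasDerivAt f (f' x) x)
    (hmono : MonotoneOn (fun x => f' x - c * x) (Ioo a b)) (hx₀ : x₀ ∈ Ioo a b)
    (hcrit : f' x₀ = 0) {x : ℝ} (hx : x ∈ Icc a b) :
    c / 2 * (x - x₀) ^ 2 ≤ f x - f x₀ := by
  set g := fun y => f y - c / 2 * (y - x₀) ^ 2
  have hg : ContinuousOn g (Icc a b) := hf.sub (by fun_prop)
  have hg' : ∀ y ∈ Ioo a b, HasDerivAt g (f' y - c * (y - x₀)) y := fun y hy => by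
    refine ((hderiv y hy).sub ((((hasDerivAt_id y).sub_const x₀).pow 2).const_mul (c / 2))
      ).congr_deriv ?_
    simp only [id_eq, Nat.cast_ofNat]; ring
  suffices g x₀ ≤ g x by simp only [g, sub_self] at this; linarith
  -- `g' y = (f' y - c * y) - (f' x₀ - c * x₀)` has the sign of `y - x₀`
  rcases le_total x₀ x with h | h
  · refine monotoneOn_of_hasDerivWithinAt_nonneg (f' := fun y => f' y - c * (y - x₀))
      (convex_Icc x₀ x) (hg.mono (Icc_subset_Icc hx₀.1.le hx.2)) (fun y hy => ?_) (fun y hy => ?_)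
      (left_mem_Icc.2 h) (right_mem_Icc.2 h) h <;> rw [interior_Icc] at hy
    · exact (hg' y ⟨hx₀.1.trans hy.1, hy.2.trans_le hx.2⟩).hasDerivWithinAt
    · have := hmono hx₀ ⟨hx₀.1.trans hy.1, hy.2.trans_le hx.2⟩ hy.1.le
      simp only at this
      linarith
  · refine antitoneOn_of_hasDerivWithinAt_nonpos (f' := fun y => f' y - c * (y - x₀))
      (convex_Icc x x₀) (hg.mono (Icc_subset_Icc hx.1 hx₀.2.le)) (fun y hy => ?_) (fun y hy => ?_)
      (left_mem_Icc.2 h) (right_mem_Icc.2 h) h <;> rw [interior_Icc] at hy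
    · exact (hg' y ⟨hx.1.trans_lt hy.1, hy.2.trans hx₀.2⟩).hasDerivWithinAt
    · have := hmono ⟨hx.1.trans_lt hy.1, hy.2.trans hx₀.2⟩ hx₀ hy.2.le
      simp only at this
      linarith

noncomputable def fbarDeriv (ω K T s : ℝ) : ℝ :=
  ω * (1 - 2 * s) + K * T * (Real.log s - Real.log (1 - s))

noncomputable def fbarDeriv2 (ω K T s : ℝ) : ℝ :=
  K * T / (s * (1 - s)) - 2 * ω

section
variable {ω K T : ℝ}

theorem fbar_one_sub (s : ℝ) : fbar ω K T (1 - s) = fbar ω K T s := by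
  simp only [fbar, sub_sub_cancel]
  ring

theorem continuous_fbar : Continuous (fbar ω K T) := by
  unfold fbar
  have := Real.continuous_mul_log
  fun_prop

theorem hasDerivAt_fbar {s : ℝ} (hs : s ∈ Ioo 0 1) :
    HasDerivAt (fbar ω K T) (fbarDeriv ω K T s) s := by
  have h := ((hasDerivAt_id s).const_mul ω).mul ((hasDerivAt_id s).const_sub 1) |>.add <|
    ((Real.hasDerivAt_mul_log hs.1.ne').add <|
      (Real.hasDerivAt_mul_log (sub_pos.2 hs.2).ne').comp s ((hasDerivAt_id s).const_sub 1)
      ).const_mul (K * T)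
  refine h.congr_deriv ?_
  simp only [fbarDeriv, id_eq]
  ring

theorem hasDerivAt_fbarDeriv {s : ℝ} (hs : s ∈ Ioo 0 1) :
    HasDerivAt (fbarDeriv ω K T) (fbarDeriv2 ω K T s) s := by
  have hs₀ : s ≠ 0 := hs.1.ne'
  have hs₁ : 1 - s ≠ 0 := (sub_pos.2 hs.2).ne'
  have h := (((hasDerivAt_id s).const_mul 2).const_sub 1).const_mul ω |>.add <|
    ((Real.hasDerivAt_log hs₀).sub <| (Real.hasDerivAt_log hs₁).comp s
      ((hasDerivAt_id s).const_sub 1)).const_mul (K * T)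
  refine h.congr_deriv ?_
  simp only [fbarDeriv2]
  field_simp
  ring

theorem continuousAt_fbarDeriv2 {s : ℝ} (hs : s ∈ Ioo 0 1) :
    ContinuousAt (fbarDeriv2 ω K T) s := by
  have hs' : s * (1 - s) ≠ 0 := (mul_pos hs.1 (sub_pos.2 hs.2)).ne'
  unfold fbarDeriv2
  fun_prop (disch := exact hs')

theorem fbarDeriv2_antitoneOn (hKT : 0 ≤ K * T) :
    AntitoneOn (fbarDeriv2 ω K T) (Ioc 0 (1 / 2)) := by
  intro x hx y hy hxy
  have hx₀ : 0 < x * (1 - x) := mul_pos hx.1 (by linarith [hx.2])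
  have : x * (1 - x) ≤ y * (1 - y) := by nlinarith [hx.2, hy.2]
  simp only [fbarDeriv2]
  gcongr

theorem fbarDeriv_eq_zero_of_isMinOn {μ : ℝ} (hmin : IsMinOn (fbar ω K T) (Icc 0 1) μ)
    (hμ : μ ∈ Ioo 0 1) : fbarDeriv ω K T μ = 0 :=
  (hmin.isLocalMin (Icc_mem_nhds hμ.1 hμ.2)).hasDerivAt_eq_zero
    (hasDerivAt_fbar hμ)

theorem fbarDeriv2_pos_of_lt_fbar_half (hKT : 0 ≤ K * T) {μ : ℝ} (hμ : μ ∈ Ioo 0 (1 / 2))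
    (hcrit : fbarDeriv ω K T μ = 0) (hlt : fbar ω K T μ < fbar ω K T (1 / 2)) :
    0 < fbarDeriv2 ω K T μ := by
  by_contra! hneg
  have hmem : ∀ x ∈ Icc μ (1 / 2), x ∈ Ioo (0 : ℝ) 1 := fun x hx =>
    ⟨hμ.1.trans_le hx.1, hx.2.trans_lt one_half_lt_one⟩
  have hconcave : ∀ x ∈ Ioo μ (1 / 2), fbarDeriv2 ω K T x ≤ 0 := fun x hx =>
    (fbarDeriv2_antitoneOn hKT ⟨hμ.1, hμ.2.le⟩ ⟨hμ.1.trans hx.1, hx.2.le⟩ hx.1.le).trans hneg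
  have hderiv_anti : AntitoneOn (fbarDeriv ω K T) (Icc μ (1 / 2)) := by
    refine antitoneOn_of_hasDerivWithinAt_nonpos (f' := fbarDeriv2 ω K T) (convex_Icc _ _)
      (fun x hx => (hasDerivAt_fbarDeriv (hmem x hx)).continuousAt.continuousWithinAt)
      (fun x hx => ?_) (fun x hx => ?_) <;> rw [interior_Icc] at *
    · exact (hasDerivAt_fbarDeriv (hmem x (Ioo_subset_Icc_self hx))).hasDerivWithinAt
    · exact hconcave x hx
  have hanti : AntitoneOn (fbar ω K T) (Icc μ (1 / 2)) := by
    refine antitoneOn_of_hasDerivWithinAt_nonpos (f' := fbarDeriv ω K T) (convex_Icc _ _)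
      continuous_fbar.continuousOn (fun x hx => ?_) (fun x hx => ?_) <;> rw [interior_Icc] at *
    · exact (hasDerivAt_fbar (hmem x (Ioo_subset_Icc_self hx))).hasDerivWithinAt
    · exact hcrit ▸ hderiv_anti (left_mem_Icc.2 hμ.2.le) (Ioo_subset_Icc_self hx) hx.1.le
  exact (hanti (left_mem_Icc.2 hμ.2.le) (right_mem_Icc.2 hμ.2.le) hμ.2.le).not_gt hlt

theorem half_mul_sq_le_fbar_sub (hKT : 0 ≤ K * T) {μ a : ℝ} (hμ : μ ∈ Ioo 0 a) (ha : a ≤ 1 / 2)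
    (hcrit : fbarDeriv ω K T μ = 0) {s : ℝ} (hs : s ∈ Icc 0 a) :
    fbarDeriv2 ω K T a / 2 * (s - μ) ^ 2 ≤ fbar ω K T s - fbar ω K T μ := by
  have hmem : ∀ x ∈ Ioo 0 a, x ∈ Ioo (0 : ℝ) 1 := fun x hx =>
    ⟨hx.1, hx.2.trans (ha.trans_lt one_half_lt_one)⟩
  refine half_mul_sq_le_sub_of_monotoneOn continuous_fbar.continuousOn
    (fun x hx => hasDerivAt_fbar (hmem x hx)) ?_ hμ hcrit hs
  refine monotoneOn_of_hasDerivWithinAt_nonneg (convex_Ioo 0 a)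
    (f' := fun x => fbarDeriv2 ω K T x - fbarDeriv2 ω K T a)
    (fun x hx => ((hasDerivAt_fbarDeriv (hmem x hx)).sub
      (hasDerivAt_const_mul _)).continuousAt.continuousWithinAt)
    (fun x hx => ?_) (fun x hx => ?_) <;> rw [interior_Ioo] at *
  · exact ((hasDerivAt_fbarDeriv (hmem x hx)).sub (hasDerivAt_const_mul _)).hasDerivWithinAt
  · exact sub_nonneg.2 <| fbarDeriv2_antitoneOn hKT ⟨hx.1, hx.2.le.trans ha⟩
      ⟨hx.1.trans hx.2, ha⟩ hx.2.le

theorem exists_pos_mul_sq_le_fbar_sub (hKT : 0 ≤ K * T) {μ : ℝ} (hμ : μ ∈ Ioo 0 (1 / 2))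
    (hcrit : fbarDeriv ω K T μ = 0) (hpos : 0 < fbarDeriv2 ω K T μ) :
    ∃ a ∈ Ioo μ (1 / 2), ∃ C > 0, ∀ s ∈ Icc 0 a,
      C * (s - μ) ^ 2 ≤ fbar ω K T s - fbar ω K T μ := by
  obtain ⟨a, ha, haμ⟩ :=
    (((continuousAt_fbarDeriv2 ⟨hμ.1, hμ.2.trans one_half_lt_one⟩).eventually
      (lt_mem_nhds hpos)).filter_mono nhdsWithin_le_nhds |>.and (Ioo_mem_nhdsGT hμ.2)).exists
  exact ⟨a, haμ, _, half_pos ha, fun s hs =>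
    half_mul_sq_le_fbar_sub hKT ⟨hμ.1, haμ.1⟩ haμ.2.le hcrit hs⟩

end

theorem mul_min_sq_le_of_wells {g : ℝ → ℝ} {μ a C m s : ℝ} (hg : ∀ x, g (1 - x) = g x)
    (hC : 0 ≤ C) (hm : 0 ≤ m) (hμ : μ ∈ Icc 0 1)
    (hwell : ∀ x ∈ Icc 0 a, C * (x - μ) ^ 2 ≤ g x) (hmid : ∀ x ∈ Icc a (1 - a), m ≤ g x)
    (hs : s ∈ Icc 0 1) : min C m * min ((s - μ) ^ 2) ((s - (1 - μ)) ^ 2) ≤ g s := by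
  have hsq₀ : 0 ≤ min ((s - μ) ^ 2) ((s - (1 - μ)) ^ 2) := le_min (sq_nonneg _) (sq_nonneg _)
  rcases le_or_gt s a with hsa | hsa
  · calc _ ≤ C * (s - μ) ^ 2 := mul_le_mul (min_le_left _ _) (min_le_left _ _) hsq₀ hC
      _ ≤ g s := hwell s ⟨hs.1, hsa⟩
  rcases le_or_gt (1 - a) s with hsa' | hsa'
  · calc _ ≤ C * ((1 - s) - μ) ^ 2 := by
          rw [show (1 - s - μ) ^ 2 = (s - (1 - μ)) ^ 2 by ring]
          exact mul_le_mul (min_le_left _ _) (min_le_right _ _) hsq₀ hC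
      _ ≤ g (1 - s) := hwell _ ⟨by linarith [hs.2], by linarith⟩
      _ = g s := hg s
  · have hsq : (s - μ) ^ 2 ≤ 1 := by nlinarith [hs.1, hs.2, hμ.1, hμ.2]
    calc _ ≤ m * 1 := mul_le_mul (min_le_right _ _) ((min_le_left _ _).trans hsq) hsq₀ hm
      _ ≤ g s := by simpa using hmid s ⟨hsa.le, hsa'.le⟩

theorem superquadratic_wells_general (ω K T : ℝ) (hK : 0 < K) (hT : 0 < T)
    (μ0 : ℝ) (hμ0 : μ0 ∈ Set.Ioo (0 : ℝ) (1 / 2))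
    (hmin : ∀ s ∈ Set.Icc (0 : ℝ) 1, s ≠ μ0 → s ≠ 1 - μ0 →
      fbar ω K T μ0 < fbar ω K T s) :
    ∃ Cw > (0 : ℝ), ∀ s ∈ Set.Icc (0 : ℝ) 1,
      Cw * min ((s - μ0) ^ 2) ((s - (1 - μ0)) ^ 2) ≤ fbar ω K T s - fbar ω K T μ0 := by
  have hKT : 0 ≤ K * T := (mul_pos hK hT).le
  have hIsMin : IsMinOn (fbar ω K T) (Icc 0 1) μ0 := fun s hs => by
    by_cases h₀ : s = μ0
    · exact h₀ ▸ le_refl (fbar ω K T μ0)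
    by_cases h₁ : s = 1 - μ0
    · exact h₁ ▸ (fbar_one_sub μ0).ge
    exact (hmin s hs h₀ h₁).le
  have hcrit := fbarDeriv_eq_zero_of_isMinOn hIsMin ⟨hμ0.1, hμ0.2.trans one_half_lt_one⟩
  have hpos := fbarDeriv2_pos_of_lt_fbar_half hKT hμ0 hcrit
    (hmin _ ⟨by norm_num, by norm_num⟩ hμ0.2.ne' (by linarith [hμ0.2]))
  obtain ⟨a, ha, C, hC, hwell⟩ := exists_pos_mul_sq_le_fbar_sub hKT hμ0 hcrit hpos
  have hgap : ∀ s ∈ Icc a (1 - a), fbar ω K T μ0 < fbar ω K T s := fun s hs =>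
    hmin s ⟨by linarith [hs.1, ha.1, hμ0.1], by linarith [hs.2, ha.1, hμ0.1]⟩
      (by rintro rfl; linarith [hs.1, ha.1]) (by rintro rfl; linarith [hs.2, ha.1])
  obtain ⟨m, hm, hmid⟩ := isCompact_Icc.exists_forall_le' continuous_fbar.continuousOn hgap
  refine ⟨min C (m - fbar ω K T μ0), lt_min hC (sub_pos.2 hm), fun s hs =>
    mul_min_sq_le_of_wells (fun x => by rw [fbar_one_sub]) hC.le (sub_pos.2 hm).le
      ⟨hμ0.1.le, by linarith [hμ0.2]⟩ hwell (fun x hx => by linarith [hmid x hx]) hs⟩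

/-- If `ω > 2KT` and `f̄` attains its minimum over `[0,1]` exactly at `μ0 ∈ (0,1/2)` and
`μ1 = 1 - μ0`, then the well function `f = f̄ - f̄(μ0)` has super-quadratic wells:
`f(s) ≥ Cw · min((s-μ0)², (s-μ1)²)` on `[0,1]` for some constant `Cw > 0`. -/
theorem superquadratic_wells (ω K T : ℝ) (hK : 0 < K) (hT : 0 < T)
    (hω : 2 * K * T < ω) (μ0 : ℝ) (hμ0 : μ0 ∈ Set.Ioo (0 : ℝ) (1 / 2))
    (hval : fbar ω K T μ0 = fbar ω K T (1 - μ0))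
    (hmin : ∀ s ∈ Set.Icc (0 : ℝ) 1, s ≠ μ0 → s ≠ 1 - μ0 →
      fbar ω K T μ0 < fbar ω K T s) :
    ∃ Cw > (0 : ℝ), ∀ s ∈ Set.Icc (0 : ℝ) 1,
      Cw * min ((s - μ0) ^ 2) ((s - (1 - μ0)) ^ 2) ≤ fbar ω K T s - fbar ω K T μ0 :=
  superquadratic_wells_general ω K T hK hT μ0 hμ0 hmin
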